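/- Let Ω ⊆ ℝⁿ be open, let σ ∈ L¹_loc(Ω) be real valued, and let 𝒜 : Ω → ℝ^{n×n} be measurable with |𝒜(x)ξ| ≤ M|ξ| for a.e. x ∈ Ω and all ξ ∈ ℝⁿ. Fix φ ∈ C^∞_c(ℝⁿ) with φ ≥ 0, support contained in the closed unit ball, and ∫_{ℝⁿ} φ dx = 1; for ε > 0 set φ_ε(x) = ε^{−n} φ(x/ε), σ_ε = φ_ε * σ and 𝒜_ε = φ_ε * 𝒜 (entrywise convolution). Suppose there is λ > 0 such that ∫_Ω σ h² dx ≤ λ ∫_Ω (𝒜∇h)·∇h dx for every test function h on Ω. Let V be an open set with compact closure contained in Ω and let 0 < ε ≤ dist(V, Ωᶜ)/2. Then for every test function h with support contained in V, ∫ σ_ε h² dx ≤ λ ∫ (𝒜_ε ∇h)·∇h dx. -/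

import Mathlib

open MeasureTheory Metric Set Filter
open scoped RealInnerProductSpace

noncomputable section

abbrev Euc (n : ℕ) := EuclideanSpace ℝ (Fin n)

/-- A test function on an open set `Ω ⊆ ℝⁿ`: a `C^∞` function with compact
support contained in `Ω`. -/
def IsTestFun {n : ℕ} (Ω : Set (Euc n)) (h : Euc n → ℝ) : Prop :=
  ContDiff ℝ (⊤ : ℕ∞) h ∧ HasCompactSupport h ∧ tsupport h ⊆ Ω

/-- `(m,M)`-ellipticity of a matrix (operator-valued) function on `Ω`. -/
def IsElliptic {n : ℕ} (Ω : Set (Euc n)) (A : Euc n → Euc n →L[ℝ] Euc n) (m M : ℝ) : Prop :=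
  ∀ᵐ x ∂(volume.restrict Ω), ∀ ξ : Euc n,
    m * ‖ξ‖ ^ 2 ≤ ⟪A x ξ, ξ⟫ ∧ ‖A x ξ‖ ≤ M * ‖ξ‖

/-- `A(x)` is symmetric for a.e. `x ∈ Ω`. -/
def IsSymmetricOn {n : ℕ} (Ω : Set (Euc n)) (A : Euc n → Euc n →L[ℝ] Euc n) : Prop :=
  ∀ᵐ x ∂(volume.restrict Ω), ∀ ξ η : Euc n, ⟪A x ξ, η⟫ = ⟪ξ, A x η⟫

/-- A vector field belongs to `L²_loc(Ω; ℝⁿ)`. -/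
def L2loc {n : ℕ} (Ω : Set (Euc n)) (Γ : Euc n → Euc n) : Prop :=
  ∀ K : Set (Euc n), K ⊆ Ω → IsCompact K → IntegrableOn (fun x => ‖Γ x‖ ^ 2) K

/-- A function is locally integrable on `Ω`. -/
def L1loc {n : ℕ} (Ω : Set (Euc n)) (f : Euc n → ℝ) : Prop :=
  ∀ K : Set (Euc n), K ⊆ Ω → IsCompact K → IntegrableOn f K

/-- `u ∈ L^{1,2}_loc(Ω)` with weak gradient `du ∈ L²_loc(Ω;ℝⁿ)`:
`u` is locally integrable and `∫ u ∂ᵢh = -∫ h (du)ᵢ` for all test functions `h`. -/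
def HasWeakGradOn {n : ℕ} (Ω : Set (Euc n)) (u : Euc n → ℝ) (du : Euc n → Euc n) : Prop :=
  L1loc Ω u ∧ L2loc Ω du ∧
    ∀ h : Euc n → ℝ, IsTestFun Ω h →
      ∫ x in Ω, u x • gradient h x = -∫ x in Ω, h x • du x

/-- Local ellipticity and boundedness of `A` on `Ω`: on every compact subset of
`Ω` there are constants `0 < m_K, M_K` as in `(m,M)`-ellipticity. -/
def IsLocallyElliptic {n : ℕ} (Ω : Set (Euc n)) (A : Euc n → Euc n →L[ℝ] Euc n) : Prop :=
  ∀ K : Set (Euc n), K ⊆ Ω → IsCompact K →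
    ∃ mK MK : ℝ, 0 < mK ∧ 0 < MK ∧
      ∀ᵐ x ∂(volume.restrict K), ∀ ξ : Euc n,
        mK * ‖ξ‖ ^ 2 ≤ ⟪A x ξ, ξ⟫ ∧ ‖A x ξ‖ ≤ MK * ‖ξ‖

open Function
open scoped Pointwise
set_option maxHeartbeats 1000000
set_option synthInstance.maxHeartbeats 100000

lemma grad_zero_of_nmem {n : ℕ} {h : Euc n → ℝ} {x : Euc n}
    (hx : x ∉ tsupport h) : gradient h x = 0 := by
  have : fderiv ℝ h x = 0 := (HasFDerivAt.of_notMem_tsupport ℝ hx).fderiv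
  simp [gradient, this]

lemma grad_comp_add_right {n : ℕ} {h : Euc n → ℝ} (hh : ContDiff ℝ (⊤ : ℕ∞) h) (t y : Euc n) :
    gradient (fun z => h (z + t)) y = gradient h (y + t) := by
  have h1 : HasFDerivAt (fun z : Euc n => z + t) (ContinuousLinearMap.id ℝ (Euc n)) y :=
    (hasFDerivAt_id y).add_const t
  have h2 : HasFDerivAt h (fderiv ℝ h (y + t)) (y + t) :=
    (hh.differentiable (by simp) (y + t)).hasFDerivAt
  have h3 : HasFDerivAt (fun z => h (z + t))
      ((fderiv ℝ h (y + t)).comp (ContinuousLinearMap.id ℝ (Euc n))) y := h2.comp y h1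
  simp [gradient, h3.fderiv]

lemma grad_continuous {n : ℕ} {h : Euc n → ℝ} (hh : ContDiff ℝ (⊤ : ℕ∞) h) :
    Continuous (gradient h) := by
  have : Continuous (fderiv ℝ h) := hh.continuous_fderiv (by simp)
  exact ((InnerProductSpace.toDual ℝ (Euc n)).symm.continuous).comp this

/-- mollification preserves the upper form bound, with the
mollified matrix `A_ε` on the right-hand side. -/
theorem statement_9 {n : ℕ} (Ω : Set (Euc n)) (hΩ : IsOpen Ω)
    (σ : Euc n → ℝ) (hσmeas : Measurable σ) (hσloc : L1loc Ω σ)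
    (A : Euc n → Euc n →L[ℝ] Euc n) (M : ℝ)
    (hAmeas : AEStronglyMeasurable A (volume.restrict Ω))
    (hAbd : ∀ᵐ x ∂(volume.restrict Ω), ∀ ξ : Euc n, ‖A x ξ‖ ≤ M * ‖ξ‖)
    (φ : Euc n → ℝ) (hφsm : ContDiff ℝ (⊤ : ℕ∞) φ) (hφsupp : HasCompactSupport φ)
    (hφball : tsupport φ ⊆ closedBall 0 1) (hφ0 : ∀ x, 0 ≤ φ x)
    (hφint : ∫ x, φ x = 1)
    (lam : ℝ) (hlam : 0 < lam)
    (hform : ∀ h : Euc n → ℝ, IsTestFun Ω h →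
      ∫ x in Ω, σ x * (h x) ^ 2
        ≤ lam * ∫ x in Ω, ⟪A x (gradient h x), gradient h x⟫)
    (V : Set (Euc n)) (hV : IsOpen V) (hVc : IsCompact (closure V)) (hVΩ : closure V ⊆ Ω)
    (ε : ℝ) (hε : 0 < ε)
    (hεd : ∀ x ∈ V, ∀ y ∉ Ω, 2 * ε ≤ dist x y) :
    ∀ h : Euc n → ℝ, ContDiff ℝ (⊤ : ℕ∞) h → HasCompactSupport h → tsupport h ⊆ V →
      (∫ x, (∫ t, (ε ^ n)⁻¹ * φ (ε⁻¹ • t) * σ (x - t)) * (h x) ^ 2)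
        ≤ lam * ∫ x, ∫ t,
            (ε ^ n)⁻¹ * φ (ε⁻¹ • t) * ⟪A (x - t) (gradient h x), gradient h x⟫ := by
  intro h hhsm hhsupp hhV
  set φe : Euc n → ℝ := fun t => (ε ^ n)⁻¹ * φ (ε⁻¹ • t) with hφe_def
  have hεn : (0:ℝ) < ε ^ n := pow_pos hε n
  have hφe0 : ∀ t, 0 ≤ φe t := fun t => mul_nonneg (inv_nonneg.2 hεn.le) (hφ0 _)
  have hφe_zero : ∀ t : Euc n, ¬ ‖t‖ ≤ ε → φe t = 0 := by
    intro t ht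
    have hmem : ε⁻¹ • t ∉ tsupport φ := by
      intro hmem
      have h1 : ‖ε⁻¹ • t‖ ≤ 1 := by
        have := hφball hmem
        simpa [mem_closedBall, dist_zero_right] using this
      rw [norm_smul, Real.norm_eq_abs, abs_of_pos (inv_pos.2 hε)] at h1
      exact ht (by
        have := (inv_mul_le_iff₀ hε).1 h1
        simpa [mul_comm] using this)
    have := image_eq_zero_of_notMem_tsupport hmem
    simp [hφe_def, this]
  have hφe_cont : Continuous φe :=
    continuous_const.mul (hφsm.continuous.comp (continuous_const_smul _))
  have hφe_supp : HasCompactSupport φe := by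
    refine HasCompactSupport.intro (isCompact_closedBall (0 : Euc n) ε) ?_
    intro t ht
    exact hφe_zero t (by simpa [mem_closedBall, dist_zero_right] using ht)
  have hφe_int : Integrable φe := hφe_cont.integrable_of_hasCompactSupport hφe_supp
  -- the compact set K
  set T := tsupport h with hT_def
  set K : Set (Euc n) := T + closedBall (0 : Euc n) ε with hK_def
  have hKco : IsCompact K := IsCompact.add hhsupp (isCompact_closedBall _ _)
  have hmemK : ∀ {x t : Euc n}, x ∈ T → ‖t‖ ≤ ε → x - t ∈ K := by
    intro x t hx ht
    exact ⟨x, hx, -t, by simpa [mem_closedBall, dist_zero_right] using ht, by abel⟩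
  have hKΩ : K ⊆ Ω := by
    rintro y ⟨a, ha, b, hb, rfl⟩
    by_contra hy
    have h2 := hεd a (hhV ha) _ hy
    have hb' : ‖b‖ ≤ ε := by simpa [mem_closedBall, dist_zero_right] using hb
    have : dist a (a + b) = ‖b‖ := by
      rw [dist_eq_norm]; simp
    rw [this] at h2
    linarith
  have hKmeas : MeasurableSet K := hKco.isClosed.measurableSet
  -- modified sigma and A
  set σ' : Euc n → ℝ := K.indicator σ with hσ'_def
  have hσ'int : Integrable σ' := (integrable_indicator_iff hKmeas).2 (hσloc K hKΩ hKco)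
  set M' := max M 0 with hM'_def
  set A' : Euc n → Euc n →L[ℝ] Euc n := K.indicator A with hA'_def
  have hA'aesm : AEStronglyMeasurable A' volume :=
    (aestronglyMeasurable_indicator_iff hKmeas).2
      (hAmeas.mono_measure (Measure.restrict_mono hKΩ le_rfl))
  have hAbd' : ∀ᵐ y : Euc n, ∀ ξ : Euc n, ‖A' y ξ‖ ≤ M' * ‖ξ‖ := by
    have h0 := (ae_restrict_iff' hΩ.measurableSet).1 hAbd
    filter_upwards [h0] with y hy ξ
    by_cases hyK : y ∈ K
    · rw [hA'_def, Set.indicator_of_mem hyK]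
      exact (hy (hKΩ hyK) ξ).trans
        (mul_le_mul_of_nonneg_right (le_max_left M 0) (norm_nonneg ξ))
    · rw [hA'_def, Set.indicator_of_notMem hyK]
      simpa using mul_nonneg (le_max_right M 0) (norm_nonneg ξ)
  have hA'nrm : ∀ᵐ y : Euc n, ‖A' y‖ ≤ K.indicator (fun _ => M') y := by
    filter_upwards [hAbd'] with y hy
    by_cases hyK : y ∈ K
    · rw [Set.indicator_of_mem hyK]
      exact ContinuousLinearMap.opNorm_le_bound _ (le_max_right M 0) hy
    · rw [Set.indicator_of_notMem hyK, hA'_def, Set.indicator_of_notMem hyK]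
      simp
  have hA'int : Integrable A' := by
    refine Integrable.mono' ?_ hA'aesm hA'nrm
    exact (integrable_indicator_iff hKmeas).2
      (integrableOn_const hKco.measure_lt_top.ne)
  -- gradient
  set v : Euc n → Euc n := gradient h with hv_def
  have hv_cont : Continuous v := grad_continuous hhsm
  have hv_zero : ∀ {x}, x ∉ T → v x = 0 := fun hx => grad_zero_of_nmem hx
  have hv_supp : HasCompactSupport v :=
    HasCompactSupport.intro hhsupp fun x hx => hv_zero hx
  obtain ⟨Cv, hCv⟩ := hv_supp.exists_bound_of_continuous hv_cont
  obtain ⟨Ch, hCh⟩ := hhsupp.exists_bound_of_continuous hhsm.continuous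
  -- product integrability
  set Fσ : Euc n → Euc n → ℝ := fun x t => φe t * σ' (x - t) * h x ^ 2 with hFσ_def
  set FA : Euc n → Euc n → ℝ := fun x t => φe t * ⟪A' (x - t) (v x), v x⟫ with hFA_def
  have hcF : Integrable (fun p : Euc n × Euc n => φe p.2 * σ' (p.1 - p.2))
      (volume.prod volume) :=
    hφe_int.convolution_integrand (ContinuousLinearMap.mul ℝ ℝ) hσ'int
  have hFσint : Integrable (uncurry Fσ) (volume.prod volume) := by
    have : Integrable (fun p : Euc n × Euc n => h p.1 ^ 2 * (φe p.2 * σ' (p.1 - p.2)))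
        (volume.prod volume) := by
      refine hcF.bdd_mul (c := Ch ^ 2) ?_ (Eventually.of_forall fun p => ?_)
      · exact (((hhsm.continuous.comp continuous_fst).pow 2)).aestronglyMeasurable
      · have := hCh p.1
        have h0 : ‖h p.1 ^ 2‖ = ‖h p.1‖ ^ 2 := by
          rw [Real.norm_eq_abs, Real.norm_eq_abs, abs_pow]
        rw [h0]
        exact pow_le_pow_left₀ (norm_nonneg _) this 2
    exact this.congr (Eventually.of_forall fun p => by simp [uncurry, hFσ_def]; ring)
  have hcG : Integrable (fun p : Euc n × Euc n => φe p.2 • A' (p.1 - p.2))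
      (volume.prod volume) :=
    hφe_int.convolution_integrand (ContinuousLinearMap.lsmul ℝ ℝ) hA'int
  have hFAint : Integrable (uncurry FA) (volume.prod volume) := by
    have haesm : AEStronglyMeasurable
        (fun p : Euc n × Euc n => (⟪(φe p.2 • A' (p.1 - p.2)) (v p.1), v p.1⟫ : ℝ))
        (volume.prod volume) := by
      have h1 : AEStronglyMeasurable (fun p : Euc n × Euc n => (φe p.2 • A' (p.1 - p.2)) (v p.1))
          (volume.prod volume) := by
        have hcont : Continuous fun q : (Euc n →L[ℝ] Euc n) × Euc n => q.1 q.2 :=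
          isBoundedBilinearMap_apply.continuous
        exact hcont.comp_aestronglyMeasurable
          (hcG.aestronglyMeasurable.prodMk
            ((hv_cont.comp continuous_fst).aestronglyMeasurable))
      exact continuous_inner.comp_aestronglyMeasurable
        (h1.prodMk ((hv_cont.comp continuous_fst).aestronglyMeasurable))
    have hbd : ∀ p : Euc n × Euc n,
        ‖(⟪(φe p.2 • A' (p.1 - p.2)) (v p.1), v p.1⟫ : ℝ)‖
          ≤ ‖φe p.2 • A' (p.1 - p.2)‖ * (Cv * Cv) := by
      intro p
      calc ‖(⟪(φe p.2 • A' (p.1 - p.2)) (v p.1), v p.1⟫ : ℝ)‖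
          ≤ ‖(φe p.2 • A' (p.1 - p.2)) (v p.1)‖ * ‖v p.1‖ := norm_inner_le_norm _ _
        _ ≤ (‖φe p.2 • A' (p.1 - p.2)‖ * ‖v p.1‖) * ‖v p.1‖ :=
            mul_le_mul_of_nonneg_right (ContinuousLinearMap.le_opNorm _ _) (norm_nonneg _)
        _ ≤ ‖φe p.2 • A' (p.1 - p.2)‖ * (Cv * Cv) := by
            rw [mul_assoc]
            refine mul_le_mul_of_nonneg_left ?_ (norm_nonneg _)
            have h1 := hCv p.1
            have h2 : (0:ℝ) ≤ ‖v p.1‖ := norm_nonneg _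
            nlinarith
    have hmaj : Integrable (fun p : Euc n × Euc n => ‖φe p.2 • A' (p.1 - p.2)‖ * (Cv * Cv))
        (volume.prod volume) := hcG.norm.mul_const _
    have : Integrable (fun p : Euc n × Euc n =>
        (⟪(φe p.2 • A' (p.1 - p.2)) (v p.1), v p.1⟫ : ℝ)) (volume.prod volume) :=
      Integrable.mono' hmaj haesm (Eventually.of_forall hbd)
    refine this.congr (Eventually.of_forall fun p => ?_)
    simp only [uncurry, hFA_def, ContinuousLinearMap.smul_apply, real_inner_smul_left]
  -- pointwise identification of the goal's integrands
  have key_σ : ∀ x t : Euc n, φe t * σ (x - t) * h x ^ 2 = Fσ x t := by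
    intro x t
    by_cases hx : x ∈ T
    · by_cases hφt : φe t = 0
      · simp [hFσ_def, hφt]
      · have ht : ‖t‖ ≤ ε := by by_contra hc; exact hφt (hφe_zero t hc)
        rw [hFσ_def]
        simp only [hσ'_def, Set.indicator_of_mem (hmemK hx ht)]
    · have : h x = 0 := image_eq_zero_of_notMem_tsupport hx
      simp [hFσ_def, this]
  have key_A : ∀ x t : Euc n,
      φe t * ⟪A (x - t) (v x), v x⟫ = FA x t := by
    intro x t
    by_cases hx : x ∈ T
    · by_cases hφt : φe t = 0
      · simp [hFA_def, hφt]
      · have ht : ‖t‖ ≤ ε := by by_contra hc; exact hφt (hφe_zero t hc)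
        rw [hFA_def]
        simp only [hA'_def, Set.indicator_of_mem (hmemK hx ht)]
    · have : v x = 0 := hv_zero hx
      simp [hFA_def, this]
  -- the core inequality, for fixed t
  have hcore : ∀ t : Euc n,
      φe t * ∫ y, σ' y * h (y + t) ^ 2
        ≤ φe t * (lam * ∫ y, (⟪A' y (v (y + t)), v (y + t)⟫ : ℝ)) := by
    intro t
    by_cases hφt : φe t = 0
    · simp [hφt]
    have ht : ‖t‖ ≤ ε := by by_contra hc; exact hφt (hφe_zero t hc)
    refine mul_le_mul_of_nonneg_left ?_ (hφe0 t)
    set g : Euc n → ℝ := fun y => h (y + t) with hg_def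
    set e : Euc n ≃ₜ Euc n := Homeomorph.addRight t with he_def
    have hsupg : tsupport g = e ⁻¹' T := by
      rw [hT_def, tsupport, tsupport, e.preimage_closure]
      congr 1
    have hgK : tsupport g ⊆ K := by
      rw [hsupg]
      intro y hy
      have : y + t ∈ T := hy
      have h2 : y + t - t ∈ K := hmemK this ht
      simpa using h2
    have hg_test : IsTestFun Ω g := by
      refine ⟨hhsm.comp (contDiff_id.add contDiff_const), ?_, hgK.trans hKΩ⟩
      rw [HasCompactSupport, hsupg]
      exact e.isCompact_preimage.2 hhsupp
    have hgrad : ∀ y, gradient g y = v (y + t) := fun y => grad_comp_add_right hhsm t y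
    have happ := hform g hg_test
    -- left side conversion
    have hleft : (∫ y, σ' y * h (y + t) ^ 2) = ∫ y in Ω, σ y * g y ^ 2 := by
      rw [← integral_indicator hΩ.measurableSet]
      refine integral_congr_ae (Eventually.of_forall fun y => ?_)
      beta_reduce
      have hgy : g y = h (y + t) := rfl
      by_cases hyΩ : y ∈ Ω
      · simp only [Set.indicator_of_mem hyΩ]
        rw [hgy]
        by_cases hyK : y ∈ K
        · rw [hσ'_def, Set.indicator_of_mem hyK]
        · have hzero : h (y + t) = 0 := by
            refine image_eq_zero_of_notMem_tsupport fun hc => hyK ?_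
            simpa using hmemK hc ht
          rw [hσ'_def, Set.indicator_of_notMem hyK, hzero]
          ring
      · simp only [Set.indicator_of_notMem hyΩ]
        have hyK : y ∉ K := fun hc => hyΩ (hKΩ hc)
        rw [hσ'_def, Set.indicator_of_notMem hyK]
        ring
    -- right side conversion
    have hright : (∫ y, (⟪A' y (v (y + t)), v (y + t)⟫ : ℝ))
        = ∫ y in Ω, (⟪A y (gradient g y), gradient g y⟫ : ℝ) := by
      rw [← integral_indicator hΩ.measurableSet]
      refine integral_congr_ae (Eventually.of_forall fun y => ?_)
      beta_reduce
      by_cases hyΩ : y ∈ Ω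
      · simp only [Set.indicator_of_mem hyΩ]
        rw [hgrad y]
        by_cases hyK : y ∈ K
        · rw [hA'_def, Set.indicator_of_mem hyK]
        · have hvy : v (y + t) = 0 := by
            refine hv_zero fun hc => hyK ?_
            simpa using hmemK hc ht
          rw [hA'_def, Set.indicator_of_notMem hyK, hvy]
          simp
      · simp only [Set.indicator_of_notMem hyΩ]
        have hyK : y ∉ K := fun hc => hyΩ (hKΩ hc)
        rw [hA'_def, Set.indicator_of_notMem hyK]
        simp
    rw [hleft, hright]
    exact happ
  -- marginal computations
  have hm1 : ∀ t : Euc n, (∫ x, Fσ x t) = φe t * ∫ y, σ' y * h (y + t) ^ 2 := by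
    intro t
    calc (∫ x, Fσ x t)
        = ∫ x, (fun z => φe t * (σ' (z - t) * h z ^ 2)) (x + t) := by
          rw [integral_add_right_eq_self (fun z => φe t * (σ' (z - t) * h z ^ 2)) t]
          refine integral_congr_ae (Eventually.of_forall fun x => ?_)
          simp only [hFσ_def]
          ring
      _ = ∫ x, φe t * (σ' x * h (x + t) ^ 2) := by
          refine integral_congr_ae (Eventually.of_forall fun x => ?_)
          simp [add_sub_cancel_right]
      _ = φe t * ∫ y, σ' y * h (y + t) ^ 2 := integral_const_mul _ _
  have hm2 : ∀ t : Euc n, (∫ x, FA x t)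
      = φe t * ∫ y, (⟪A' y (v (y + t)), v (y + t)⟫ : ℝ) := by
    intro t
    calc (∫ x, FA x t)
        = ∫ x, (fun z => φe t * (⟪A' (z - t) (v z), v z⟫ : ℝ)) (x + t) := by
          rw [integral_add_right_eq_self (fun z => φe t * (⟪A' (z - t) (v z), v z⟫ : ℝ)) t]
      _ = ∫ x, φe t * (⟪A' x (v (x + t)), v (x + t)⟫ : ℝ) := by
          refine integral_congr_ae (Eventually.of_forall fun x => ?_)
          simp [add_sub_cancel_right]
      _ = φe t * ∫ y, (⟪A' y (v (y + t)), v (y + t)⟫ : ℝ) := integral_const_mul _ _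
  -- assemble
  have hswapσ : (∫ x, ∫ t, Fσ x t) = ∫ t, ∫ x, Fσ x t := integral_integral_swap hFσint
  have hswapA : (∫ x, ∫ t, FA x t) = ∫ t, ∫ x, FA x t := integral_integral_swap hFAint
  have hLHS : (∫ x, (∫ t, (ε ^ n)⁻¹ * φ (ε⁻¹ • t) * σ (x - t)) * (h x) ^ 2)
      = ∫ x, ∫ t, Fσ x t := by
    refine integral_congr_ae (Eventually.of_forall fun x => ?_)
    beta_reduce
    rw [← integral_mul_const]
    exact integral_congr_ae (Eventually.of_forall fun t => key_σ x t)
  have hRHS : (∫ x, ∫ t, (ε ^ n)⁻¹ * φ (ε⁻¹ • t) * (⟪A (x - t) (gradient h x), gradient h x⟫ : ℝ))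
      = ∫ x, ∫ t, FA x t := by
    refine integral_congr_ae (Eventually.of_forall fun x => ?_)
    exact integral_congr_ae (Eventually.of_forall fun t => key_A x t)
  rw [hLHS, hRHS, hswapσ, hswapA]
  have hm1int : Integrable (fun t => ∫ x, Fσ x t) := hFσint.integral_prod_right
  have hm2int : Integrable (fun t => ∫ x, FA x t) := hFAint.integral_prod_right
  calc (∫ t, ∫ x, Fσ x t)
      ≤ ∫ t, lam * ∫ x, FA x t := by
        refine integral_mono hm1int (hm2int.const_mul lam) fun t => ?_
        rw [hm1 t, hm2 t]
        calc φe t * ∫ y, σ' y * h (y + t) ^ 2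
            ≤ φe t * (lam * ∫ y, (⟪A' y (v (y + t)), v (y + t)⟫ : ℝ)) := hcore t
          _ = lam * (φe t * ∫ y, (⟪A' y (v (y + t)), v (y + t)⟫ : ℝ)) := by ring
    _ = lam * ∫ t, ∫ x, FA x t := integral_const_mul lam _
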